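/- arXiv:2008.03702 — 2 statements merged into one kernel-verified Lean document; each statement's English description precedes it below -/
import Mathlib

section
/- Let m_𝓘 ∈ ℕ with m_𝓘 ≥ 1, let λ_i > 0 for i in a finite nonempty set 𝓞, and let (γ_i)_{i∈𝓞} satisfy 0 < γ_i < 1 and ∑_{i∈𝓞} γ_i = 1. Then there exist k_i > 0 (i ∈ 𝓞) such that for every i ∈ 𝓞: γ_i = (λ_i k_i)/(λ_i + m_𝓘 k_i) · ( ∑_{j∈𝓞} (λ_j k_j)/(λ_j + m_𝓘 k_j) )^{−1}. -/
open Filter Topology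

/-
Fix θ > 0 so small that m θ γ_i < λ_i for every i. Then λ_i k / (λ_i + m k) = θ γ_i has the
positive solution k_i = λ_i θ γ_i / (λ_i - m θ γ_i), and since ∑ γ_j = 1 the normalized values
are θ γ_i / ∑_j θ γ_j = γ_i.
-/

lemma exists_pos_forall_mul_lt {ι : Type*} [Finite ι] (c lam : ι → ℝ) (hlam : ∀ i, 0 < lam i) :
    ∃ θ > 0, ∀ i, θ * c i < lam i := by
  have hsmall : ∀ i, ∀ᶠ θ in 𝓝 (0 : ℝ), θ * c i < lam i := fun i => by
    have hcont : Continuous fun θ : ℝ => θ * c i := by fun_prop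
    exact hcont.continuousAt.eventually_lt continuousAt_const (by simpa using hlam i)
  have hnear : ∀ᶠ θ in 𝓝[>] (0 : ℝ), 0 < θ ∧ ∀ i, θ * c i < lam i :=
    (eventually_mem_nhdsWithin (a := 0) (s := Set.Ioi 0)).and
      ((eventually_all.2 hsmall).filter_mono nhdsWithin_le_nhds)
  exact hnear.exists

lemma exists_pos_div_add_mul_eq {lam m t : ℝ} (hlam : 0 < lam) (ht : 0 < t) (hmt : m * t < lam) :
    ∃ k > 0, lam * k / (lam + m * k) = t := by
  have hd : 0 < lam - m * t := sub_pos.2 hmt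
  refine ⟨lam * t / (lam - m * t), by positivity, ?_⟩
  have hden : lam + m * (lam * t / (lam - m * t)) = lam ^ 2 / (lam - m * t) := by
    field_simp
    ring
  rw [hden, mul_div_assoc', div_div_div_cancel_right₀ hd.ne']
  field_simp

lemma eq_mul_inv_sum_of_eq_mul {ι : Type*} [Fintype ι] {γ f : ι → ℝ} {θ : ℝ} (hθ : θ ≠ 0)
    (hsum : ∑ i, γ i = 1) (hf : ∀ i, f i = θ * γ i) (i : ι) :
    γ i = f i * (∑ j, f j)⁻¹ := by
  simp only [hf, ← Finset.mul_sum, hsum, mul_one]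
  field_simp

theorem stmt_14_general (mI : ℕ) {ι : Type*} [Fintype ι]
    (lam γ : ι → ℝ)
    (hlam : ∀ i, 0 < lam i)
    (hγ : ∀ i, 0 < γ i ∧ γ i < 1)
    (hsum : ∑ i, γ i = 1) :
    ∃ k : ι → ℝ, (∀ i, 0 < k i) ∧
      ∀ i, γ i = lam i * k i / (lam i + (mI : ℝ) * k i) *
        (∑ j, lam j * k j / (lam j + (mI : ℝ) * k j))⁻¹ := by
  obtain ⟨θ, hθ, hθsmall⟩ := exists_pos_forall_mul_lt (fun i => (mI : ℝ) * γ i) lam hlam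
  have hsolve : ∀ i, ∃ k > 0, lam i * k / (lam i + (mI : ℝ) * k) = θ * γ i := fun i =>
    exists_pos_div_add_mul_eq (hlam i) (mul_pos hθ (hγ i).1) (by linarith [hθsmall i])
  choose k hkpos hk using hsolve
  exact ⟨k, hkpos, eq_mul_inv_sum_of_eq_mul hθ.ne' hsum hk⟩

theorem stmt_14 (mI : ℕ) (hmI : 1 ≤ mI) {ι : Type*} [Fintype ι] [Nonempty ι]
    (lam γ : ι → ℝ)
    (hlam : ∀ i, 0 < lam i)
    (hγ : ∀ i, 0 < γ i ∧ γ i < 1)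
    (hsum : ∑ i, γ i = 1) :
    ∃ k : ι → ℝ, (∀ i, 0 < k i) ∧
      ∀ i, γ i = lam i * k i / (lam i + (mI : ℝ) * k i) *
        (∑ j, lam j * k j / (lam j + (mI : ℝ) * k j))⁻¹ :=
  stmt_14_general mI lam γ hlam hγ hsum
end

section
/- Let n ≥ 1, λ₁, λ₂ > 0, and γ_i ∈ (0,1) for i = 1,…,n. Consider the linear system k(−γ_i(λ₁+λ₂)+λ₁) ∑_{j=1}^n X_j + λ₁ λ₂ X_i = γ_i λ₁ λ₂, i = 1,…,n, in the unknowns X_i. Then for all sufficiently small k > 0 this system has a unique solution (X_i), and moreover 0 < X_i < 1 for every i. -/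
/-!
Summing the equations shows that `S = ∑ X_j` satisfies `(λ₁λ₂ + k ∑ c_j) S = λ₁λ₂ ∑ γ_j`, where
`c_i = -γ_i(λ₁+λ₂) + λ₁`; once `λ₁λ₂ + k ∑ c_j ≠ 0` this determines `S`, and then each `X_i`.
The resulting solution depends continuously on `k` and equals `γ` at `k = 0`, so it stays in
the open cube `(0,1)ⁿ` for all small `k`.
-/

open Finset Filter Topology

section RankOne

variable {K ι : Type*} [Field K] [Fintype ι]

def rankOneSolution (a b : ι → K) (L : K) : ι → K :=
  fun i => (b i - a i * ((∑ j, b j) / (L + ∑ j, a j))) / L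

theorem sum_eq_of_rankOne_system {a b X : ι → K} {L : K} (hD : L + ∑ i, a i ≠ 0)
    (hX : ∀ i, a i * ∑ j, X j + L * X i = b i) :
    ∑ j, X j = (∑ j, b j) / (L + ∑ j, a j) := by
  have hsum : (L + ∑ j, a j) * ∑ j, X j = ∑ j, b j := by
    simp only [← hX, sum_add_distrib, ← sum_mul, ← mul_sum]
    ring
  rw [eq_div_iff hD, ← hsum, mul_comm]

theorem rankOne_system_iff {a b X : ι → K} {L : K} (hL : L ≠ 0) (hD : L + ∑ i, a i ≠ 0) :
    (∀ i, a i * ∑ j, X j + L * X i = b i) ↔ X = rankOneSolution a b L := by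
  constructor
  · intro hX
    ext i
    rw [rankOneSolution, ← sum_eq_of_rankOne_system hD hX, ← hX i]
    field_simp
    ring
  · rintro rfl i
    have hsum : ∑ j, rankOneSolution a b L j = (∑ j, b j) / (L + ∑ j, a j) := by
      simp only [rankOneSolution, ← sum_div, sum_sub_distrib, ← sum_mul]
      field_simp
      ring
    rw [hsum, rankOneSolution]
    field_simp
    ring

end RankOne

theorem tendsto_rankOneSolution_mul_nhds_zero {𝕜 ι : Type*} [NormedField 𝕜] [Fintype ι]
    (c b : ι → 𝕜) {L : 𝕜} (hL : L ≠ 0) :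
    Tendsto (fun k : 𝕜 => rankOneSolution (fun j => k * c j) b L) (𝓝 0)
      (𝓝 (fun i => b i / L)) := by
  rw [tendsto_pi_nhds]
  intro i
  have hcont : ContinuousAt (fun k : 𝕜 => rankOneSolution (fun j => k * c j) b L i) 0 := by
    unfold rankOneSolution
    fun_prop (disch := simpa using hL)
  simpa [rankOneSolution] using hcont.tendsto

theorem stmt_16_general (n : ℕ) (lam₁ lam₂ : ℝ)
    (hlam₁ : 0 < lam₁) (hlam₂ : 0 < lam₂)
    (γ : Fin n → ℝ) (hγ : ∀ i, 0 < γ i ∧ γ i < 1) :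
    ∃ k₀ : ℝ, 0 < k₀ ∧ ∀ k : ℝ, 0 < k → k < k₀ →
      (∃! X : Fin n → ℝ, ∀ i,
        k * (-(γ i) * (lam₁ + lam₂) + lam₁) * (∑ j, X j) + lam₁ * lam₂ * X i
          = γ i * (lam₁ * lam₂)) ∧
      (∀ X : Fin n → ℝ,
        (∀ i, k * (-(γ i) * (lam₁ + lam₂) + lam₁) * (∑ j, X j) + lam₁ * lam₂ * X i
          = γ i * (lam₁ * lam₂)) → ∀ i, 0 < X i ∧ X i < 1) := by
  set L := lam₁ * lam₂
  set c : Fin n → ℝ := fun i => -(γ i) * (lam₁ + lam₂) + lam₁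
  set b : Fin n → ℝ := fun i => γ i * L
  have hL : L ≠ 0 := by positivity
  have hD : ∀ᶠ k in 𝓝 (0 : ℝ), L + ∑ j, k * c j ≠ 0 := by
    have hcont : ContinuousAt (fun k : ℝ => L + ∑ j, k * c j) 0 := by fun_prop
    simpa using hcont.eventually_ne (by simpa using hL)
  have hX : ∀ᶠ k in 𝓝 (0 : ℝ), ∀ i, rankOneSolution (fun j => k * c j) b L i ∈ Set.Ioo 0 1 := by
    refine eventually_all.2 fun i => ?_
    have hγi : b i / L = γ i := mul_div_cancel_right₀ _ hL
    refine (tendsto_pi_nhds.1 (tendsto_rankOneSolution_mul_nhds_zero c b hL) i).eventually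
      (Ioo_mem_nhds ?_ ?_) <;> simp only [hγi, hγ i]
  obtain ⟨k₀, hk₀, hsmall⟩ := Metric.eventually_nhds_iff.1 (hD.and hX)
  refine ⟨k₀, hk₀, fun k hk hkk₀ => ?_⟩
  obtain ⟨hDk, hXk⟩ := hsmall (by rwa [Real.dist_0_eq_abs, abs_of_pos hk])
  have hiff := fun X => rankOne_system_iff (a := fun j => k * c j) (b := b) (X := X) hL hDk
  refine ⟨⟨_, (hiff _).2 rfl, fun Y hY => (hiff Y).1 hY⟩, fun Y hY => ?_⟩
  rw [(hiff Y).1 hY]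
  exact hXk

theorem stmt_16 (n : ℕ) (hn : 1 ≤ n) (lam₁ lam₂ : ℝ)
    (hlam₁ : 0 < lam₁) (hlam₂ : 0 < lam₂)
    (γ : Fin n → ℝ) (hγ : ∀ i, 0 < γ i ∧ γ i < 1) :
    ∃ k₀ : ℝ, 0 < k₀ ∧ ∀ k : ℝ, 0 < k → k < k₀ →
      (∃! X : Fin n → ℝ, ∀ i,
        k * (-(γ i) * (lam₁ + lam₂) + lam₁) * (∑ j, X j) + lam₁ * lam₂ * X i
          = γ i * (lam₁ * lam₂)) ∧
      (∀ X : Fin n → ℝ,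
        (∀ i, k * (-(γ i) * (lam₁ + lam₂) + lam₁) * (∑ j, X j) + lam₁ * lam₂ * X i
          = γ i * (lam₁ * lam₂)) → ∀ i, 0 < X i ∧ X i < 1) :=
  stmt_16_general n lam₁ lam₂ hlam₁ hlam₂ γ hγ
end
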